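/- arXiv:2110.00627 — 2 statements merged into one kernel-verified Lean document; each statement's English description precedes it below -/
import Mathlib

section
/- For a positive vector v ∈ ℝⁿ with entries vᵢ > 0, a matrix K ∈ ℝ^{n×n} with entries K(i,j) = exp(−C(i,j)/η) where 0 ≤ C(i,j) ≤ R and η > 0, define u(i) = 1/((Kv)(i)). Then the vector λ = η·log(u) satisfies maxᵢ λ(i) − minᵢ λ(i) ≤ R. -/
open Real Finset

/-! Changing the row of costs from `C i` to `C i'` moves each cost by at most `R`, so every term
of `(K v) i'` is at most `exp (R / η)` times the matching term of `(K v) i`. Taking `η * log` turns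
this ratio bound into the additive bound `R` on `λ i - λ i' = η log (K v) i' - η log (K v) i`. -/

theorem sum_exp_neg_div_mul_le_exp_mul {ι : Type*} [Fintype ι] {η R : ℝ} (hη : 0 < η)
    {c c' w : ι → ℝ} (hw : ∀ j, 0 ≤ w j) (hcc' : ∀ j, c j ≤ c' j + R) :
    ∑ j, exp (-c' j / η) * w j ≤ exp (R / η) * ∑ j, exp (-c j / η) * w j := by
  rw [mul_sum]
  refine sum_le_sum fun j _ => ?_
  rw [← mul_assoc, ← exp_add, ← add_div]
  gcongr
  · exact hw j
  · linarith [hcc' j]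

theorem mul_log_sub_mul_log_le_of_le_exp_mul {η R x y : ℝ} (hη : 0 < η) (hx : 0 < x) (hy : 0 < y)
    (h : y ≤ exp (R / η) * x) : η * log y - η * log x ≤ R := by
  have hlog : log y - log x ≤ R / η := by
    rw [← log_div hy.ne' hx.ne', log_le_iff_le_exp (div_pos hy hx), div_le_iff₀ hx]
    exact h
  calc η * log y - η * log x = η * (log y - log x) := by ring
    _ ≤ η * (R / η) := by gcongr
    _ = R := mul_div_cancel₀ R hη.ne'

theorem sinkhorn_dual_oscillation_general {n : ℕ}
    (η R : ℝ) (hη : 0 < η)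
    (C : Fin n → Fin n → ℝ)
    (hC : ∀ i j, 0 ≤ C i j ∧ C i j ≤ R)
    (v : Fin n → ℝ) (hv : ∀ i, 0 < v i)
    (u lam : Fin n → ℝ)
    (hu : ∀ i, u i = (∑ j, Real.exp (-C i j / η) * v j)⁻¹)
    (hlam : ∀ i, lam i = η * Real.log (u i)) :
    ∀ i i', lam i - lam i' ≤ R := by
  intro i i'
  have hKv_pos : ∀ k, 0 < ∑ j, exp (-C k j / η) * v j := fun k =>
    sum_pos (fun j _ => mul_pos (exp_pos _) (hv j)) ⟨i, mem_univ i⟩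
  have hKv_le : ∑ j, exp (-C i' j / η) * v j ≤ exp (R / η) * ∑ j, exp (-C i j / η) * v j :=
    sum_exp_neg_div_mul_le_exp_mul hη (fun j => (hv j).le)
      fun j => by linarith [(hC i j).2, (hC i' j).1]
  rw [hlam, hlam, hu, hu, log_inv, log_inv]
  linarith [mul_log_sub_mul_log_le_of_le_exp_mul hη (hKv_pos i) (hKv_pos i') hKv_le]

/-- Bound on the oscillation of a Sinkhorn dual variable after an update. -/
theorem sinkhorn_dual_oscillation {n : ℕ} (hn : 0 < n)
    (η R : ℝ) (hη : 0 < η)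
    (C : Fin n → Fin n → ℝ)
    (hC : ∀ i j, 0 ≤ C i j ∧ C i j ≤ R)
    (v : Fin n → ℝ) (hv : ∀ i, 0 < v i)
    (u lam : Fin n → ℝ)
    (hu : ∀ i, u i = (∑ j, Real.exp (-C i j / η) * v j)⁻¹)
    (hlam : ∀ i, lam i = η * Real.log (u i)) :
    ∀ i i', lam i - lam i' ≤ R :=
  sinkhorn_dual_oscillation_general η R hη C hC v hv u lam hu hlam
end

section
/- Under the same hypotheses as the expected-stopping-time lemma (Y₀ ≤ A a.s., 0 ≤ Y_{t−1} − Y_t ≤ 2(A−a) a.s., conditional expected decrease at least h while Y_t ≥ a), for every δ ∈ (0, 1/e) one has P(s ≤ (6(A−a)/h) log(1/δ)) ≥ 1 − δ for s = min{t : Y_t ≤ a}. -/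
open MeasureTheory Filter Real

/-!
Put `b = A - a` and `φₜ = 1{Yₜ > a} · exp (l (Yₜ - a))` with `l = log 3 / (2b)`. Since the
decrement `Dₜ` lies in `[0, 2b]`, convexity of `exp` gives `exp (-l Dₜ) ≤ 1 - Dₜ / (3b)`, and
pulling `φₜ` out of the conditional expectation of `Dₜ` yields `E φₜ₊₁ ≤ (1 - h / (3b)) E φₜ`.
As `φ₀ ≤ exp (l b) = √3` and `φ ≥ 1` on `{Y > a}`, Markov's inequality gives
`P (Y_N > a) ≤ √3 (1 - h / (3b)) ^ N`, which is at most `δ` for `N = ⌊(6b / h) log (1 / δ)⌋`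
because `log (1 - u) ≤ -u - u² / 2`; and `s ≤ N` on `{Y_N ≤ a}`. If `h > 2b`, the drift condition
can only hold where `Y < a`, so `Y_N < a` almost surely.
-/

lemma exp_neg_log_three_mul_le {b x : ℝ} (hb : 0 < b) (hx0 : 0 ≤ x) (hx : x ≤ 2 * b) :
    exp (-(log 3 / (2 * b) * x)) ≤ 1 - x / (3 * b) := by
  set t := x / (2 * b) with ht
  have ht0 : 0 ≤ t := by positivity
  have ht1 : t ≤ 1 := by rw [div_le_one (by positivity)]; exact hx
  have hconv := convexOn_exp.2 (Set.mem_univ 0) (Set.mem_univ (-log 3))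
    (sub_nonneg.2 ht1) ht0 (by ring)
  rw [smul_eq_mul, smul_eq_mul, smul_eq_mul, smul_eq_mul, exp_zero, exp_neg,
    exp_log (by norm_num)] at hconv
  calc exp (-(log 3 / (2 * b) * x)) = exp ((1 - t) * 0 + t * -log 3) := by
        rw [ht]; congr 1; field_simp; ring
    _ ≤ (1 - t) * 1 + t * 3⁻¹ := hconv
    _ = 1 - x / (3 * b) := by rw [ht]; field_simp; ring

lemma one_sub_le_exp_neg_add_sq_div_two {u : ℝ} (hu0 : 0 ≤ u) (hu1 : u < 1) :
    1 - u ≤ exp (-(u + u ^ 2 / 2)) := by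
  have hlog := hasSum_pow_div_log_of_abs_lt_one (x := u) (by rwa [abs_of_nonneg hu0])
  have htwo : u + u ^ 2 / 2 ≤ -log (1 - u) := by
    have := sum_le_hasSum (Finset.range 2) (fun i _ => by positivity) hlog
    norm_num [Finset.sum_range_succ] at this
    exact this
  calc 1 - u = exp (log (1 - u)) := (exp_log (by linarith)).symm
    _ ≤ exp (-(u + u ^ 2 / 2)) := exp_le_exp.2 (by linarith)

lemma exp_mul_one_sub_pow_le {u L : ℝ} {N : ℕ} (hu0 : 0 < u) (hu : u ≤ 2 / 3) (hL : 1 ≤ L)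
    (hN : 2 * L ≤ u * (N + 1)) : exp (log 3 / 2) * (1 - u) ^ N ≤ exp (-L) := by
  have hexponent : log 3 / 2 - N * (u + u ^ 2 / 2) ≤ -L := by
    nlinarith [log_three_lt_d9, mul_nonneg hu0.le (sub_nonneg.2 hL)]
  calc exp (log 3 / 2) * (1 - u) ^ N ≤ exp (log 3 / 2) * exp (-(u + u ^ 2 / 2)) ^ N := by
        gcongr
        · linarith
        · exact one_sub_le_exp_neg_add_sq_div_two hu0.le (by linarith)
    _ = exp (log 3 / 2 - N * (u + u ^ 2 / 2)) := by
        rw [← exp_nat_mul, ← exp_add]; ring_nf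
    _ ≤ exp (-L) := exp_le_exp.2 hexponent

noncomputable def expExcess (l a y : ℝ) : ℝ := if a < y then exp (l * (y - a)) else 0

section expExcess

variable {l a y : ℝ}

lemma expExcess_nonneg : 0 ≤ expExcess l a y := by
  unfold expExcess; split_ifs <;> positivity

lemma one_le_expExcess (hl : 0 ≤ l) (hy : a < y) : 1 ≤ expExcess l a y := by
  rw [expExcess, if_pos hy]
  exact one_le_exp (mul_nonneg hl (sub_nonneg.2 hy.le))

lemma expExcess_le {A : ℝ} (hl : 0 ≤ l) (hy : y ≤ A) : expExcess l a y ≤ exp (l * (A - a)) := by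
  unfold expExcess
  split_ifs
  · gcongr
  · positivity

lemma expExcess_le_mul_exp {y' : ℝ} (hy : y' ≤ y) :
    expExcess l a y' ≤ expExcess l a y * exp (-(l * (y - y'))) := by
  by_cases hy' : a < y'
  · rw [expExcess, expExcess, if_pos hy', if_pos (hy'.trans_le hy), ← exp_add]
    exact (congrArg exp (by ring)).le
  · rw [expExcess, if_neg hy']
    exact mul_nonneg expExcess_nonneg (exp_pos _).le

lemma measurable_expExcess : Measurable (expExcess l a) :=
  Measurable.ite measurableSet_Ioi (by fun_prop) measurable_const

end expExcess

section Drift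

variable {Ω : Type*} {m0 : MeasurableSpace Ω} {μ : Measure Ω}

lemma integrable_expExcess_comp [IsFiniteMeasure μ] {l a A : ℝ} {X : Ω → ℝ} (hl : 0 ≤ l)
    (hX : Measurable X) (hXA : ∀ᵐ ω ∂μ, X ω ≤ A) :
    Integrable (fun ω => expExcess l a (X ω)) μ := by
  refine .of_bound (measurable_expExcess.comp hX).aestronglyMeasurable (exp (l * (A - a))) ?_
  filter_upwards [hXA] with ω hω
  rw [norm_of_nonneg expExcess_nonneg]
  exact expExcess_le hl hω

lemma integrable_sub_of_ae_bounded [IsFiniteMeasure μ] {X Z : Ω → ℝ} {c : ℝ}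
    (hX : Measurable X) (hZ : Measurable Z) (hXZ : ∀ᵐ ω ∂μ, 0 ≤ X ω - Z ω ∧ X ω - Z ω ≤ c) :
    Integrable (X - Z) μ := by
  refine .of_bound (hX.sub hZ).aestronglyMeasurable c ?_
  filter_upwards [hXZ] with ω hω
  rw [Pi.sub_apply, norm_of_nonneg hω.1]
  exact hω.2

lemma ae_le_of_ae_succ_le {Y : ℕ → Ω → ℝ} {A : ℝ} (hY0 : ∀ᵐ ω ∂μ, Y 0 ω ≤ A)
    (hmono : ∀ t, ∀ᵐ ω ∂μ, Y (t + 1) ω ≤ Y t ω) : ∀ t, ∀ᵐ ω ∂μ, Y t ω ≤ A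
  | 0 => hY0
  | t + 1 => by
    filter_upwards [hmono t, ae_le_of_ae_succ_le hY0 hmono t] with ω h₁ h₂
    exact h₁.trans h₂

lemma ae_lt_of_ae_le_lt_condExp [IsFiniteMeasure μ] {m : MeasurableSpace Ω} (hm : m ≤ m0)
    {D : Ω → ℝ} {Y : Ω → ℝ} {a c h : ℝ} (hD : Integrable D μ) (hDc : ∀ᵐ ω ∂μ, D ω ≤ c)
    (hcond : ∀ᵐ ω ∂μ, a ≤ Y ω → h ≤ μ[D | m] ω) (hch : c < h) : ∀ᵐ ω ∂μ, Y ω < a := by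
  have hcondExp : μ[D | m] ≤ᵐ[μ] fun _ => c := by
    simpa only [condExp_const hm] using condExp_mono (m := m) hD (integrable_const c) hDc
  filter_upwards [hcond, hcondExp] with ω h₁ h₂
  by_contra! hY
  linarith [h₁ hY]

lemma mul_integral_le_integral_mul_of_le_condExp [IsFiniteMeasure μ] {m : MeasurableSpace Ω}
    (hm : m ≤ m0) {X D : Ω → ℝ} {c : ℝ} (hX : StronglyMeasurable[m] X) (hX0 : ∀ ω, 0 ≤ X ω)
    (hXint : Integrable X μ) (hD : Integrable D μ) (hXD : Integrable (X * D) μ)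
    (hc : ∀ᵐ ω ∂μ, X ω ≠ 0 → c ≤ μ[D | m] ω) : c * ∫ ω, X ω ∂μ ≤ ∫ ω, X ω * D ω ∂μ := by
  have hpull : μ[X * D | m] =ᵐ[μ] X * μ[D | m] := condExp_mul_of_stronglyMeasurable_left hX hXD hD
  calc c * ∫ ω, X ω ∂μ = ∫ ω, c * X ω ∂μ := (integral_const_mul c _).symm
    _ ≤ ∫ ω, (X * μ[D | m]) ω ∂μ := by
        refine integral_mono_ae (hXint.const_mul c) (integrable_condExp.congr hpull) ?_
        filter_upwards [hc] with ω hω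
        rcases (hX0 ω).eq_or_lt with h0 | hpos
        · simp [← h0]
        · rw [Pi.mul_apply, mul_comm]
          exact mul_le_mul_of_nonneg_left (hω hpos.ne') hpos.le
    _ = ∫ ω, μ[X * D | m] ω ∂μ := integral_congr_ae hpull.symm
    _ = ∫ ω, X ω * D ω ∂μ := integral_condExp hm

variable {ℱ : Filtration ℕ m0} {Y : ℕ → Ω → ℝ} {A a h : ℝ}

lemma integral_expExcess_succ_le [IsFiniteMeasure μ] (hadapted : Adapted ℱ Y) (hAa : a < A)
    {t : ℕ} (hYA : ∀ᵐ ω ∂μ, Y t ω ≤ A)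
    (hdec : ∀ᵐ ω ∂μ, 0 ≤ Y t ω - Y (t + 1) ω ∧ Y t ω - Y (t + 1) ω ≤ 2 * (A - a))
    (hcond : ∀ᵐ ω ∂μ, a ≤ Y t ω → h ≤ μ[Y t - Y (t + 1) | ℱ t] ω) :
    ∫ ω, expExcess (log 3 / (2 * (A - a))) a (Y (t + 1) ω) ∂μ
      ≤ (1 - h / (3 * (A - a))) * ∫ ω, expExcess (log 3 / (2 * (A - a))) a (Y t ω) ∂μ := by
  have hb : 0 < A - a := sub_pos.2 hAa
  set l := log 3 / (2 * (A - a))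
  have hl : 0 ≤ l := by positivity
  set φ : Ω → ℝ := fun ω => expExcess l a (Y t ω)
  have hφ : StronglyMeasurable[ℱ t] φ :=
    (measurable_expExcess.comp (hadapted t)).stronglyMeasurable
  have hYA' : ∀ᵐ ω ∂μ, Y (t + 1) ω ≤ A := by
    filter_upwards [hYA, hdec] with ω h₁ h₂
    linarith [h₂.1]
  have hφint : Integrable φ μ := integrable_expExcess_comp hl hadapted.measurable hYA
  have hDint : Integrable (Y t - Y (t + 1)) μ :=
    integrable_sub_of_ae_bounded hadapted.measurable hadapted.measurable hdec
  have hφD : Integrable (fun ω => φ ω * (Y t ω - Y (t + 1) ω)) μ := by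
    refine hDint.bdd_mul (c := exp (l * (A - a))) (hφ.mono (ℱ.le t)).aestronglyMeasurable ?_
    filter_upwards [hYA] with ω hω
    rw [norm_of_nonneg expExcess_nonneg]
    exact expExcess_le hl hω
  have hdrift : h * ∫ ω, φ ω ∂μ ≤ ∫ ω, φ ω * (Y t ω - Y (t + 1) ω) ∂μ := by
    refine mul_integral_le_integral_mul_of_le_condExp (ℱ.le t) hφ (fun _ => expExcess_nonneg)
      hφint hDint hφD ?_
    filter_upwards [hcond] with ω hω hφω
    refine hω (le_of_lt ?_)
    by_contra hY
    exact hφω (if_neg hY)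
  have hstep : ∀ᵐ ω ∂μ, expExcess l a (Y (t + 1) ω)
      ≤ φ ω - φ ω * (Y t ω - Y (t + 1) ω) / (3 * (A - a)) := by
    filter_upwards [hdec] with ω ⟨hD0, hD⟩
    calc expExcess l a (Y (t + 1) ω) ≤ φ ω * exp (-(l * (Y t ω - Y (t + 1) ω))) :=
          expExcess_le_mul_exp (sub_nonneg.1 hD0)
      _ ≤ φ ω * (1 - (Y t ω - Y (t + 1) ω) / (3 * (A - a))) := by
          gcongr
          · exact expExcess_nonneg
          · exact exp_neg_log_three_mul_le hb hD0 hD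
      _ = _ := by ring
  calc ∫ ω, expExcess l a (Y (t + 1) ω) ∂μ
      ≤ ∫ ω, (φ ω - φ ω * (Y t ω - Y (t + 1) ω) / (3 * (A - a))) ∂μ :=
        integral_mono_ae (integrable_expExcess_comp hl hadapted.measurable hYA')
          (hφint.sub (hφD.div_const _)) hstep
    _ = ∫ ω, φ ω ∂μ - (∫ ω, φ ω * (Y t ω - Y (t + 1) ω) ∂μ) / (3 * (A - a)) := by
        rw [integral_sub hφint (hφD.div_const _), integral_div]
    _ ≤ (1 - h / (3 * (A - a))) * ∫ ω, φ ω ∂μ := by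
        rw [one_sub_mul, div_mul_eq_mul_div]
        gcongr

theorem measureReal_lt_le_of_expected_decrease [IsProbabilityMeasure μ]
    (hadapted : Adapted ℱ Y) (hAa : a < A) (hh3 : h ≤ 3 * (A - a))
    (hY0 : ∀ᵐ ω ∂μ, Y 0 ω ≤ A)
    (hdec : ∀ t : ℕ, ∀ᵐ ω ∂μ, 0 ≤ Y t ω - Y (t + 1) ω ∧ Y t ω - Y (t + 1) ω ≤ 2 * (A - a))
    (hcond : ∀ t : ℕ, ∀ᵐ ω ∂μ, a ≤ Y t ω → h ≤ μ[Y t - Y (t + 1) | ℱ t] ω) (n : ℕ) :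
    μ.real {ω | a < Y n ω} ≤ exp (log 3 / 2) * (1 - h / (3 * (A - a))) ^ n := by
  have hb : 0 < A - a := sub_pos.2 hAa
  set l := log 3 / (2 * (A - a))
  have hl : 0 ≤ l := by positivity
  have hlb : l * (A - a) = log 3 / 2 := by simp only [l]; field_simp
  have hYA := ae_le_of_ae_succ_le hY0 fun t => (hdec t).mono fun ω h => sub_nonneg.1 h.1
  have hpotential : ∀ n, ∫ ω, expExcess l a (Y n ω) ∂μ
      ≤ exp (log 3 / 2) * (1 - h / (3 * (A - a))) ^ n := by
    intro n
    induction n with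
    | zero =>
      rw [pow_zero, mul_one, ← hlb]
      calc ∫ ω, expExcess l a (Y 0 ω) ∂μ ≤ ∫ _, exp (l * (A - a)) ∂μ :=
            integral_mono_ae (integrable_expExcess_comp hl hadapted.measurable hY0)
              (integrable_const _) (hY0.mono fun ω hω => expExcess_le hl hω)
        _ = exp (l * (A - a)) := by simp
    | succ n ih =>
      calc ∫ ω, expExcess l a (Y (n + 1) ω) ∂μ
          ≤ (1 - h / (3 * (A - a))) * ∫ ω, expExcess l a (Y n ω) ∂μ :=
            integral_expExcess_succ_le hadapted hAa (hYA n) (hdec n) (hcond n)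
        _ ≤ (1 - h / (3 * (A - a))) * (exp (log 3 / 2) * (1 - h / (3 * (A - a))) ^ n) := by
            gcongr
            rw [sub_nonneg, div_le_one (by positivity)]
            exact hh3
        _ = _ := by ring
  calc μ.real {ω | a < Y n ω} ≤ μ.real {ω | 1 ≤ expExcess l a (Y n ω)} :=
        measureReal_mono fun ω hω => one_le_expExcess hl hω
    _ ≤ ∫ ω, expExcess l a (Y n ω) ∂μ := by
        simpa using mul_meas_ge_le_integral_of_nonneg
          (ae_of_all _ fun _ => expExcess_nonneg)
          (integrable_expExcess_comp hl hadapted.measurable (hYA n)) 1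
    _ ≤ _ := hpotential n

theorem measure_lt_le_exp_neg_of_expected_decrease [IsProbabilityMeasure μ]
    (hadapted : Adapted ℱ Y) (hAa : a < A) (hh : 0 < h) (hY0 : ∀ᵐ ω ∂μ, Y 0 ω ≤ A)
    (hdec : ∀ t : ℕ, ∀ᵐ ω ∂μ, 0 ≤ Y t ω - Y (t + 1) ω ∧ Y t ω - Y (t + 1) ω ≤ 2 * (A - a))
    (hcond : ∀ t : ℕ, ∀ᵐ ω ∂μ, a ≤ Y t ω → h ≤ μ[Y t - Y (t + 1) | ℱ t] ω)
    {L : ℝ} (hL : 1 ≤ L) :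
    μ {ω | a < Y ⌊6 * (A - a) / h * L⌋₊ ω} ≤ ENNReal.ofReal (exp (-L)) := by
  have hb : 0 < A - a := sub_pos.2 hAa
  set N := ⌊6 * (A - a) / h * L⌋₊
  rcases le_or_gt h (2 * (A - a)) with hh2 | hh2
  · have hN : 2 * L ≤ h / (3 * (A - a)) * (N + 1) := by
      have := Nat.lt_floor_add_one (6 * (A - a) / h * L)
      calc 2 * L = h / (3 * (A - a)) * (6 * (A - a) / h * L) := by field_simp; ring
        _ ≤ _ := by gcongr
    rw [← ofReal_measureReal]
    refine ENNReal.ofReal_le_ofReal ?_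
    calc μ.real {ω | a < Y N ω} ≤ exp (log 3 / 2) * (1 - h / (3 * (A - a))) ^ N :=
          measureReal_lt_le_of_expected_decrease hadapted hAa (by linarith) hY0 hdec hcond N
      _ ≤ exp (-L) := exp_mul_one_sub_pow_le (by positivity)
          (by rw [div_le_iff₀ (by positivity)]; linarith) hL hN
  · refine le_of_eq_of_le (measure_eq_zero_iff_ae_notMem.2 ?_) zero_le
    filter_upwards [ae_lt_of_ae_le_lt_condExp (ℱ.le N)
      (integrable_sub_of_ae_bounded hadapted.measurable hadapted.measurable (hdec N))
      ((hdec N).mono fun _ h => h.2) (hcond N) hh2] with ω hω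
    exact not_lt.2 hω.le

end Drift

lemma sInf_hitting_le_ofReal {P : ℕ → Prop} {x : ℝ} (hP : P ⌊x⌋₊) :
    ((sInf {t : ℕ∞ | ∃ n : ℕ, t = n ∧ P n} : ℕ∞) : ENNReal) ≤ ENNReal.ofReal x := by
  have hle : sInf {t : ℕ∞ | ∃ n : ℕ, t = n ∧ P n} ≤ ⌊x⌋₊ := sInf_le ⟨_, rfl, hP⟩
  calc ((sInf {t : ℕ∞ | ∃ n : ℕ, t = n ∧ P n} : ℕ∞) : ENNReal) ≤ ((⌊x⌋₊ : ℕ∞) : ENNReal) := by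
        exact_mod_cast hle
    _ ≤ ENNReal.ofReal x := by
        rcases le_or_gt 0 x with hx | hx
        · simpa [← ENNReal.ofReal_natCast] using ENNReal.ofReal_le_ofReal (Nat.floor_le hx)
        · simp [Nat.floor_of_nonpos hx.le]

theorem prob_stopping_time_bound_general
    {Ω : Type*} {m0 : MeasurableSpace Ω} {μ : Measure Ω} [IsProbabilityMeasure μ]
    (ℱ : Filtration ℕ m0)
    (Y : ℕ → Ω → ℝ) (hadapted : Adapted ℱ Y)
    (A a h : ℝ) (hAa : a < A) (hh : 0 < h)
    (hY0 : ∀ᵐ ω ∂μ, Y 0 ω ≤ A)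
    (hdec : ∀ t : ℕ, ∀ᵐ ω ∂μ, 0 ≤ Y t ω - Y (t + 1) ω ∧ Y t ω - Y (t + 1) ω ≤ 2 * (A - a))
    (hcond : ∀ t : ℕ, ∀ᵐ ω ∂μ, a ≤ Y t ω →
      h ≤ (μ[Y t - Y (t + 1) | ℱ t]) ω)
    (s : Ω → ℕ∞) (hs : ∀ ω, s ω = sInf {t : ℕ∞ | ∃ n : ℕ, t = n ∧ Y n ω ≤ a})
    (δ : ℝ) (hδ : δ ∈ Set.Ioo (0 : ℝ) (1 / Real.exp 1)) :
    ENNReal.ofReal (1 - δ) ≤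
      μ {ω | s ω ≤ ENNReal.ofReal (6 * (A - a) / h * Real.log (1 / δ))} := by
  obtain ⟨hδ0, hδe⟩ := hδ
  have hL : 1 ≤ log (1 / δ) := by
    rw [le_log_iff_exp_le (by positivity), le_div_iff₀ hδ0, ← le_div_iff₀' (exp_pos 1)]
    exact hδe.le
  have hexp : exp (-log (1 / δ)) = δ := by rw [exp_neg, exp_log (by positivity), one_div, inv_inv]
  set N := ⌊6 * (A - a) / h * log (1 / δ)⌋₊
  have htail : μ {ω | a < Y N ω} ≤ ENNReal.ofReal δ :=
    (measure_lt_le_exp_neg_of_expected_decrease hadapted hAa hh hY0 hdec hcond hL).trans_eq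
      (congrArg ENNReal.ofReal hexp)
  have hsub : {ω | Y N ω ≤ a} ⊆ {ω | s ω ≤ ENNReal.ofReal (6 * (A - a) / h * log (1 / δ))} :=
    fun ω hω => (hs ω ▸ sInf_hitting_le_ofReal hω : (s ω : ENNReal) ≤ _)
  have hmeas : MeasurableSet {ω | a < Y N ω} :=
    measurableSet_lt measurable_const hadapted.measurable
  calc ENNReal.ofReal (1 - δ) = 1 - ENNReal.ofReal δ := by
        rw [ENNReal.ofReal_sub _ hδ0.le, ENNReal.ofReal_one]
    _ ≤ 1 - μ {ω | a < Y N ω} := tsub_le_tsub_left htail 1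
    _ = μ {ω | Y N ω ≤ a} := by
        rw [← prob_compl_eq_one_sub hmeas]
        congr 1; ext ω; simp
    _ ≤ _ := measure_mono hsub

/-- High-probability stopping-time bound (Altschuler–Weed, Lemma 5.3,
probability part): under the same hypotheses, for δ ∈ (0, 1/e) the hitting time
s = min{t : Yₜ ≤ a} satisfies P(s ≤ (6(A−a)/h)·log(1/δ)) ≥ 1 − δ. -/
theorem prob_stopping_time_bound
    {Ω : Type*} {m0 : MeasurableSpace Ω} {μ : Measure Ω} [IsProbabilityMeasure μ]
    (ℱ : Filtration ℕ m0)
    (Y : ℕ → Ω → ℝ) (hadapted : Adapted ℱ Y)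
    (hint : ∀ t, Integrable (Y t) μ)
    (A a h : ℝ) (hAa : a < A) (hh : 0 < h)
    (hY0 : ∀ᵐ ω ∂μ, Y 0 ω ≤ A)
    (hdec : ∀ t : ℕ, ∀ᵐ ω ∂μ, 0 ≤ Y t ω - Y (t + 1) ω ∧ Y t ω - Y (t + 1) ω ≤ 2 * (A - a))
    (hcond : ∀ t : ℕ, ∀ᵐ ω ∂μ, a ≤ Y t ω →
      h ≤ (μ[Y t - Y (t + 1) | ℱ t]) ω)
    (s : Ω → ℕ∞) (hs : ∀ ω, s ω = sInf {t : ℕ∞ | ∃ n : ℕ, t = n ∧ Y n ω ≤ a})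
    (δ : ℝ) (hδ : δ ∈ Set.Ioo (0 : ℝ) (1 / Real.exp 1)) :
    ENNReal.ofReal (1 - δ) ≤
      μ {ω | s ω ≤ ENNReal.ofReal (6 * (A - a) / h * Real.log (1 / δ))} :=
  prob_stopping_time_bound_general ℱ Y hadapted A a h hAa hh hY0 hdec hcond s hs δ hδ
end
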